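/- For any z ∈ ℝ^{d̄}, if there exists an index j̄ ∈ {1,…,d̄} such that |z_{j̄}| < 150πε/(√m·L_f), then ‖(1/m)·Σ_{i=1}^m ∇f_i(z)‖ > 2ε/√m. -/

import Mathlib

open Real Matrix Finset
open scoped Kronecker

noncomputable section

def Psi (u : ℝ) : ℝ := if u ≤ 0 then 0 else 1 - Real.exp (-u ^ 2)
def Phi (v : ℝ) : ℝ := 4 * Real.arctan v + 2 * π
def zc {d : ℕ} (z : EuclideanSpace ℝ (Fin d)) (j : ℕ) : ℝ :=
  if h : 1 ≤ j ∧ j - 1 < d then z ⟨j - 1, h.2⟩ else 0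
def phi {d : ℕ} (z : EuclideanSpace ℝ (Fin d)) (j : ℕ) : ℝ :=
  if j = 1 then -(Psi 1 * Phi (zc z 1))
  else Psi (-zc z (j - 1)) * Phi (-zc z j) - Psi (zc z (j - 1)) * Phi (zc z j)
def hfun (m i : ℕ) {d : ℕ} (z : EuclideanSpace ℝ (Fin d)) : ℝ :=
  if i ≤ m / 3 then phi z 1 + 3 * ∑ j ∈ Finset.Icc 1 (d / 2), phi z (2 * j)
  else if i ≤ 2 * m / 3 then phi z 1
  else phi z 1 + 3 * ∑ j ∈ Finset.Icc 1 (d / 2), phi z (2 * j + 1)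
def ff (m : ℕ) (Lf ε : ℝ) (i : ℕ) {d : ℕ} (z : EuclideanSpace ℝ (Fin d)) : ℝ :=
  300 * π * ε ^ 2 / (m * Lf) * hfun m i ((Real.sqrt m * Lf / (150 * π * ε)) • z)
def blkN {m d : ℕ} (x : EuclideanSpace ℝ (Fin m × Fin d)) (i : ℕ) :
    EuclideanSpace ℝ (Fin d) :=
  WithLp.toLp 2 (fun j => if h : 1 ≤ i ∧ i - 1 < m then x (⟨i - 1, h.2⟩, j) else 0)
def f0 (m : ℕ) (Lf ε : ℝ) {d : ℕ} (x : EuclideanSpace ℝ (Fin m × Fin d)) : ℝ :=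
  ∑ i ∈ Finset.Icc 1 m, ff m Lf ε i (blkN x i)
def l1norm {ι : Type*} [Fintype ι] (x : ι → ℝ) : ℝ := ∑ i, |x i|
def Jmat (p : ℕ) : Matrix (Fin (p - 1)) (Fin p) ℝ :=
  Matrix.of fun i j => if j.val = i.val then -1 else if j.val = i.val + 1 then 1 else 0
def Hmat (m d : ℕ) (Lf : ℝ) : Matrix (Fin (m - 1) × Fin d) (Fin m × Fin d) ℝ :=
  ((m : ℝ) * Lf) • (Jmat m ⊗ₖ (1 : Matrix (Fin d) (Fin d) ℝ))
def Mset (m₁ m₂ : ℕ) : Finset ℕ := (Finset.Icc 1 (3 * m₂ - 1)).image (· * m₁)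
def JM (m₁ m₂ : ℕ) : Matrix (Fin (3 * m₂ - 1)) (Fin (3 * m₁ * m₂)) ℝ :=
  Matrix.of fun i j =>
    if j.val + 1 = (i.val + 1) * m₁ then -1
    else if j.val = (i.val + 1) * m₁ then 1 else 0
def Abar (m₁ m₂ d : ℕ) (Lf : ℝ) :
    Matrix (Fin (3 * m₂ - 1) × Fin d) (Fin (3 * m₁ * m₂) × Fin d) ℝ :=
  ((3 * m₁ * m₂ : ℕ) * Lf) • (JM m₁ m₂ ⊗ₖ (1 : Matrix (Fin d) (Fin d) ℝ))
abbrev MCidx (m₁ m₂ : ℕ) := {k : Fin (3 * m₁ * m₂ - 1) // k.val + 1 ∉ Mset m₁ m₂}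
def JMC (m₁ m₂ : ℕ) : Matrix (MCidx m₁ m₂) (Fin (3 * m₁ * m₂)) ℝ :=
  Matrix.of fun k j => Jmat (3 * m₁ * m₂) k.val j
def Amat (m₁ m₂ d : ℕ) (Lf : ℝ) :
    Matrix (MCidx m₁ m₂ × Fin d) (Fin (3 * m₁ * m₂) × Fin d) ℝ :=
  ((3 * m₁ * m₂ : ℕ) * Lf) • (JMC m₁ m₂ ⊗ₖ (1 : Matrix (Fin d) (Fin d) ℝ))
def mvec {ι κ : Type*} [Fintype κ] (M : Matrix ι κ ℝ) (x : EuclideanSpace ℝ κ) :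
    EuclideanSpace ℝ ι :=
  WithLp.toLp 2 (fun i => ∑ j, M i j * x j)
def sNorm {ι κ : Type*} [Fintype ι] [Fintype κ] [DecidableEq κ] (M : Matrix ι κ ℝ) : ℝ :=
  ‖LinearMap.toContinuousLinearMap (Matrix.toEuclideanLin M)‖
def lamMax {ι : Type*} [Fintype ι] [DecidableEq ι] (M : Matrix ι ι ℝ) : ℝ :=
  sSup (spectrum ℝ M)
def lamMinPos {ι : Type*} [Fintype ι] [DecidableEq ι] (M : Matrix ι ι ℝ) : ℝ :=
  sInf (spectrum ℝ M ∩ Set.Ioi 0)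
def condNum {ι κ : Type*} [Fintype ι] [DecidableEq ι] [Fintype κ] (M : Matrix ι κ ℝ) : ℝ :=
  Real.sqrt (lamMax (M * Mᵀ) / lamMinPos (M * Mᵀ))
def gfun (m₁ m₂ d : ℕ) (β : ℝ) (x : EuclideanSpace ℝ (Fin (3 * m₁ * m₂) × Fin d)) : ℝ :=
  β * ∑ i ∈ Mset m₁ m₂, l1norm (fun j => blkN x i j - blkN x (i + 1) j)
def gbar (m₁ m₂ d : ℕ) (Lf β : ℝ)
    (y : EuclideanSpace ℝ (Fin (3 * m₂ - 1) × Fin d)) : ℝ :=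
  β / ((3 * m₁ * m₂ : ℕ) * Lf) * l1norm y
def IsProx {E : Type*} [NormedAddCommGroup E] [InnerProductSpace ℝ E]
    (η : ℝ) (ψ : E → ℝ) (x p : E) : Prop :=
  ∀ y, ψ p + ‖p - x‖ ^ 2 / (2 * η) ≤ ψ y + ‖y - x‖ ^ 2 / (2 * η)
def subdiff {E : Type*} [NormedAddCommGroup E] [InnerProductSpace ℝ E]
    (ψ : E → ℝ) (x : E) : Set E :=
  {v | ∀ y, ψ x + (inner ℝ v (y - x) : ℝ) ≤ ψ y}
def suppSub {d : ℕ} (z : EuclideanSpace ℝ (Fin d)) (k : ℕ) : Prop :=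
  ∀ j : Fin d, z j ≠ 0 → j.val + 1 ≤ k

/-- x is an ε̂-stationary point of instance 𝒫. -/
def IsStatP (m₁ m₂ d : ℕ) (Lf ε β εh : ℝ)
    (x : EuclideanSpace ℝ (Fin (3 * m₁ * m₂) × Fin d)) : Prop :=
  ∃ γ : EuclideanSpace ℝ (MCidx m₁ m₂ × Fin d), ∃ ξ ∈ subdiff (gfun m₁ m₂ d β) x,
    ‖gradient (f0 (3 * m₁ * m₂) Lf ε) x + mvec (Amat m₁ m₂ d Lf)ᵀ γ + ξ‖ ≤ εh ∧
    ‖mvec (Amat m₁ m₂ d Lf) x‖ ≤ εh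

/-- (x, y) is an ε̂-stationary point of the splitting reformulation (SP). -/
def IsStatSP (m₁ m₂ d : ℕ) (Lf ε β εh : ℝ)
    (x : EuclideanSpace ℝ (Fin (3 * m₁ * m₂) × Fin d))
    (y : EuclideanSpace ℝ (Fin (3 * m₂ - 1) × Fin d)) : Prop :=
  ∃ z₁ : EuclideanSpace ℝ (Fin (3 * m₂ - 1) × Fin d),
    ∃ z₂ : EuclideanSpace ℝ (MCidx m₁ m₂ × Fin d),
      Metric.infDist 0 ((· - z₁) '' subdiff (gbar m₁ m₂ d Lf β) y) ≤ εh ∧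
      ‖gradient (f0 (3 * m₁ * m₂) Lf ε) x + mvec (Abar m₁ m₂ d Lf)ᵀ z₁ +
        mvec (Amat m₁ m₂ d Lf)ᵀ z₂‖ ≤ εh ∧
      ‖y - mvec (Abar m₁ m₂ d Lf) x‖ ≤ εh ∧ ‖mvec (Amat m₁ m₂ d Lf) x‖ ≤ εh

/-- The sequence X follows Algorithm Class 1 on instance 𝒫. -/
def FollowsAC1 (m₁ m₂ d : ℕ) (Lf ε β : ℝ)
    (X : ℕ → EuclideanSpace ℝ (Fin (3 * m₁ * m₂) × Fin d)) : Prop :=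
  X 0 = 0 ∧ ∀ t, 1 ≤ t → ∃ η : ℝ, 0 < η ∧
    ∃ ξ ∈ Submodule.span ℝ (⋃ s ∈ Set.Iio t,
      ({X s, gradient (f0 (3 * m₁ * m₂) Lf ε) (X s),
        mvec ((Amat m₁ m₂ d Lf)ᵀ * Amat m₁ m₂ d Lf) (X s)} :
          Set (EuclideanSpace ℝ (Fin (3 * m₁ * m₂) × Fin d)))),
      ∃ p, IsProx η (gfun m₁ m₂ d β) ξ p ∧
        X t ∈ Submodule.span ℝ ({ξ, p} : Set (EuclideanSpace ℝ (Fin (3 * m₁ * m₂) × Fin d)))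

/-- The pair of sequences (X, Y) follows Algorithm Class 2 on the splitting
reformulation (SP) of instance 𝒫. -/
def FollowsAC2 (m₁ m₂ d : ℕ) (Lf ε β : ℝ)
    (X : ℕ → EuclideanSpace ℝ (Fin (3 * m₁ * m₂) × Fin d))
    (Y : ℕ → EuclideanSpace ℝ (Fin (3 * m₂ - 1) × Fin d)) : Prop :=
  X 0 = 0 ∧ Y 0 = 0 ∧ ∀ t, 1 ≤ t →
    (X t ∈ Submodule.span ℝ (⋃ s ∈ Set.Iio t,
      ({X s, gradient (f0 (3 * m₁ * m₂) Lf ε) (X s),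
        mvec ((Amat m₁ m₂ d Lf)ᵀ * Amat m₁ m₂ d Lf) (X s),
        mvec ((Abar m₁ m₂ d Lf)ᵀ * Abar m₁ m₂ d Lf) (X s),
        mvec (Abar m₁ m₂ d Lf)ᵀ (Y s)} :
          Set (EuclideanSpace ℝ (Fin (3 * m₁ * m₂) × Fin d))))) ∧
    ∃ η : ℝ, 0 < η ∧
      ∃ ξ ∈ Submodule.span ℝ (⋃ s ∈ Set.Iio t,
        ({Y s, mvec (Abar m₁ m₂ d Lf * (Abar m₁ m₂ d Lf)ᵀ) (Y s),
          mvec (Abar m₁ m₂ d Lf) (X s)} :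
            Set (EuclideanSpace ℝ (Fin (3 * m₂ - 1) × Fin d)))),
        ∃ p, IsProx η (gbar m₁ m₂ d Lf β) ξ p ∧
          Y t ∈ Submodule.span ℝ
            ({ξ, p} : Set (EuclideanSpace ℝ (Fin (3 * m₂ - 1) × Fin d)))

/-! ### Auxiliary lemmas for stmt_7 -/

def psi' (u : ℝ) : ℝ := if u ≤ 0 then 0 else 2 * u * Real.exp (-u ^ 2)

lemma psi'_nonneg (u : ℝ) : 0 ≤ psi' u := by
  unfold psi'; split
  · exact le_refl _
  · exact mul_nonneg (by nlinarith [not_le.1 ‹¬ u ≤ 0›]) (Real.exp_pos _).le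

lemma Psi_nonneg (u : ℝ) : 0 ≤ Psi u := by
  unfold Psi; split
  · exact le_refl _
  · have : Real.exp (-u ^ 2) ≤ 1 := Real.exp_le_one_iff.2 (neg_nonpos.2 (by positivity))
    linarith

lemma Psi_one : Psi 1 = 1 - Real.exp (-1) := by norm_num [Psi]

lemma Psi_ge_of_one_le {a : ℝ} (h : 1 ≤ a) : 1 - Real.exp (-1) ≤ Psi a := by
  have h0 : ¬ a ≤ 0 := by linarith
  unfold Psi
  rw [if_neg h0]
  have : Real.exp (-a ^ 2) ≤ Real.exp (-1) := Real.exp_le_exp.2 (by nlinarith)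
  linarith

lemma hasDerivAt_Psi (u : ℝ) : HasDerivAt Psi (psi' u) u := by
  rcases lt_trichotomy u 0 with hu | hu | hu
  · have h1 : Psi =ᶠ[nhds u] (fun _ => (0:ℝ)) := by
      filter_upwards [Iio_mem_nhds hu] with v hv
      simp [Psi, le_of_lt (Set.mem_Iio.1 hv)]
    have h0 : HasDerivAt (fun _ : ℝ => (0:ℝ)) 0 u := hasDerivAt_const u 0
    have := h0.congr_of_eventuallyEq h1
    simpa [psi', le_of_lt hu] using this
  · subst hu
    have hP0 : Psi 0 = 0 := by simp [Psi]
    rw [show psi' 0 = 0 by simp [psi']]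
    rw [hasDerivAt_iff_tendsto_slope]
    have hb : ∀ h : ℝ, ‖slope Psi 0 h‖ ≤ |h| := by
      intro h
      rcases le_or_gt h 0 with hh | hh
      · simp [slope, Psi, hh, hP0]
      · have h1 : Psi h = 1 - Real.exp (-h ^ 2) := by simp [Psi, not_le.2 hh]
        have h2 : 0 ≤ 1 - Real.exp (-h^2) := by
          have : Real.exp (-h ^ 2) ≤ 1 :=
            Real.exp_le_one_iff.2 (neg_nonpos.2 (by positivity))
          linarith
        have h3 : 1 - Real.exp (-h^2) ≤ h^2 := by
          have := Real.add_one_le_exp (-h^2)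
          linarith
        simp only [slope, hP0, sub_zero, h1, vsub_eq_sub]
        rw [norm_smul, norm_inv, Real.norm_eq_abs, Real.norm_eq_abs]
        rw [abs_of_nonneg h2, abs_of_pos hh]
        rw [inv_mul_le_iff₀ (by positivity)]
        nlinarith
    refine squeeze_zero_norm hb ?_
    have : Filter.Tendsto (fun h : ℝ => |h|) (nhds 0) (nhds 0) := by
      simpa using (continuous_abs.tendsto (0:ℝ))
    exact this.mono_left nhdsWithin_le_nhds
  · have hd : HasDerivAt (fun v : ℝ => 1 - Real.exp (-v ^ 2)) (2 * u * Real.exp (-u^2)) u := by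
      have h1 : HasDerivAt (fun v : ℝ => -v ^ 2) (-(2 * u)) u := by
        simpa using (hasDerivAt_pow 2 u).fun_neg
      have h2 := (h1.exp).const_sub 1
      refine h2.congr_deriv ?_
      ring
    have h1 : (fun v : ℝ => 1 - Real.exp (-v ^ 2)) =ᶠ[nhds u] Psi := by
      filter_upwards [Ioi_mem_nhds hu] with v hv
      simp [Psi, not_le.2 (Set.mem_Ioi.1 hv)]
    have := hd.congr_of_eventuallyEq h1.symm
    simpa [psi', not_le.2 hu] using this

lemma Phi_pos (v : ℝ) : 0 < Phi v := by
  have := Real.neg_pi_div_two_lt_arctan v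
  have := Real.pi_pos
  unfold Phi; nlinarith

lemma hasDerivAt_Phi (v : ℝ) : HasDerivAt Phi (4 / (1 + v ^ 2)) v := by
  have h := ((Real.hasDerivAt_arctan v).const_mul 4).add_const (2 * π)
  have he : (4 : ℝ) * (1 / (1 + v ^ 2)) = 4 / (1 + v ^ 2) := by ring
  rw [he] at h
  exact h

lemma Phi'_ge_two {b : ℝ} (hb : |b| ≤ 1) : 2 ≤ 4 / (1 + b ^ 2) := by
  rw [le_div_iff₀ (by positivity)]
  have h1 : b^2 ≤ 1 := by nlinarith [(abs_le.1 hb).1, (abs_le.1 hb).2]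
  nlinarith

lemma differentiable_Psi : Differentiable ℝ Psi := fun u => (hasDerivAt_Psi u).differentiableAt
lemma differentiable_Phi : Differentiable ℝ Phi := fun v => (hasDerivAt_Phi v).differentiableAt

def dlt (J i : ℕ) : ℝ := if i = J then 1 else 0

lemma dlt_nonneg (J i : ℕ) : 0 ≤ dlt J i := by unfold dlt; split <;> norm_num

def Dphi {d : ℕ} (w : EuclideanSpace ℝ (Fin d)) (J k : ℕ) : ℝ :=
  -(dlt J (k-1) * psi' (-(zc w (k-1))) * Phi (-(zc w k)))
  - dlt J k * Psi (-(zc w (k-1))) * (4/(1+(zc w k)^2))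
  - dlt J (k-1) * psi' (zc w (k-1)) * Phi (zc w k)
  - dlt J k * Psi (zc w (k-1)) * (4/(1+(zc w k)^2))

def Dphi1 {d : ℕ} (w : EuclideanSpace ℝ (Fin d)) (J : ℕ) : ℝ :=
  -(Psi 1 * ((4/(1+(zc w 1)^2)) * dlt J 1))

def DH {d : ℕ} (w : EuclideanSpace ℝ (Fin d)) (J m i : ℕ) : ℝ :=
  if i ≤ m / 3 then Dphi1 w J + 3 * ∑ j ∈ Finset.Icc 1 (d / 2), Dphi w J (2 * j)
  else if i ≤ 2 * m / 3 then Dphi1 w J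
  else Dphi1 w J + 3 * ∑ j ∈ Finset.Icc 1 (d / 2), Dphi w J (2 * j + 1)

lemma exp_neg_one_lt_half : Real.exp (-1) < 1/2 := by
  have h2 : (2:ℝ) < Real.exp 1 := by
    have := Real.add_one_lt_exp (x := 1) one_ne_zero
    linarith
  rw [Real.exp_neg]
  rw [inv_lt_comm₀ (by positivity) (by norm_num)]
  linarith

lemma Dphi_nonpos {d : ℕ} (w : EuclideanSpace ℝ (Fin d)) (J k : ℕ) : Dphi w J k ≤ 0 := by
  unfold Dphi
  have h1 := mul_nonneg (mul_nonneg (dlt_nonneg J (k-1)) (psi'_nonneg (-(zc w (k-1)))))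
    (Phi_pos (-(zc w k))).le
  have h2 := mul_nonneg (mul_nonneg (dlt_nonneg J k) (Psi_nonneg (-(zc w (k-1)))))
    (by positivity : (0:ℝ) ≤ 4/(1+(zc w k)^2))
  have h3 := mul_nonneg (mul_nonneg (dlt_nonneg J (k-1)) (psi'_nonneg (zc w (k-1))))
    (Phi_pos (zc w k)).le
  have h4 := mul_nonneg (mul_nonneg (dlt_nonneg J k) (Psi_nonneg (zc w (k-1))))
    (by positivity : (0:ℝ) ≤ 4/(1+(zc w k)^2))
  linarith

lemma Dphi1_nonpos {d : ℕ} (w : EuclideanSpace ℝ (Fin d)) (J : ℕ) : Dphi1 w J ≤ 0 := by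
  unfold Dphi1
  have := mul_nonneg (Psi_nonneg 1)
    (mul_nonneg (by positivity : (0:ℝ) ≤ 4/(1+(zc w 1)^2)) (dlt_nonneg J 1))
  linarith

lemma Dphi1_at {d : ℕ} (w : EuclideanSpace ℝ (Fin d)) (hb : |zc w 1| ≤ 1) :
    Dphi1 w 1 ≤ -(2 * (1 - Real.exp (-1))) := by
  unfold Dphi1 dlt
  rw [if_pos rfl, Psi_one]
  have h1 := Phi'_ge_two hb
  have h2 : (0:ℝ) < 1 - Real.exp (-1) := by have := _root_.exp_neg_one_lt_half; linarith
  nlinarith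

lemma Dphi_at_J {d : ℕ} (w : EuclideanSpace ℝ (Fin d)) {J : ℕ} (hJ2 : 2 ≤ J)
    (hb : |zc w J| ≤ 1) (ha : 1 ≤ |zc w (J-1)|) :
    Dphi w J J ≤ -(2 * (1 - Real.exp (-1))) := by
  unfold Dphi
  have hd2 : dlt J J = 1 := if_pos rfl
  have hd1 : dlt J (J-1) = 0 := by unfold dlt; rw [if_neg (by omega)]
  rw [hd1, hd2]
  simp only [zero_mul, one_mul, neg_zero, zero_sub, sub_zero]
  set a := zc w (J-1)
  set b := zc w J
  have hphi := Phi'_ge_two hb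
  have hq : 1 - Real.exp (-1) ≤ Psi (-a) + Psi a := by
    rcases le_abs.1 ha with h | h
    · have := Psi_ge_of_one_le h
      have := Psi_nonneg (-a)
      linarith
    · have := Psi_ge_of_one_le h
      have := Psi_nonneg a
      linarith
  have h2 : (0:ℝ) < 1 - Real.exp (-1) := by have := _root_.exp_neg_one_lt_half; linarith
  have hPa := Psi_nonneg a
  have hPna := Psi_nonneg (-a)
  nlinarith

lemma zc_add_single {d : ℕ} (w : EuclideanSpace ℝ (Fin d)) (j : Fin d) (u : ℝ) (k : ℕ) :
    zc (w + u • EuclideanSpace.single j (1:ℝ)) k = zc w k + u * dlt (j.val + 1) k := by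
  unfold zc dlt
  by_cases h : 1 ≤ k ∧ k - 1 < d
  · rw [dif_pos h, dif_pos h]
    have hco : (w + u • EuclideanSpace.single j (1:ℝ)) ⟨k-1, h.2⟩
        = w ⟨k-1, h.2⟩ + u * (EuclideanSpace.single j (1:ℝ)) ⟨k-1, h.2⟩ := rfl
    rw [hco, EuclideanSpace.single_apply]
    by_cases hk : k = j.val + 1
    · have hf : (⟨k-1, h.2⟩ : Fin d) = j := by
        apply Fin.ext; simp; omega
      rw [if_pos hk, if_pos hf]
    · have hf : (⟨k-1, h.2⟩ : Fin d) ≠ j := by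
        intro hc
        apply hk
        have := congrArg Fin.val hc
        simp at this; omega
      rw [if_neg hk, if_neg hf]
  · rw [dif_neg h, dif_neg h]
    have hne : k ≠ j.val + 1 := by
      intro hc; apply h; constructor <;> omega
    rw [if_neg hne]; ring

-- 1-D helpers
lemma hasDerivAt_affine (a δ : ℝ) : HasDerivAt (fun u : ℝ => a + u * δ) δ 0 := by
  simpa using ((hasDerivAt_id (0:ℝ)).mul_const δ).const_add a

lemma hasDerivAt_PsiComp (a δ : ℝ) :
    HasDerivAt (fun u : ℝ => Psi (a + u * δ)) (psi' a * δ) 0 := by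
  have := (hasDerivAt_Psi (a + 0 * δ)).comp 0 (hasDerivAt_affine a δ)
  simpa [Function.comp_def] using this

lemma hasDerivAt_PhiComp (a δ : ℝ) :
    HasDerivAt (fun u : ℝ => Phi (a + u * δ)) ((4/(1+a^2)) * δ) 0 := by
  have := (hasDerivAt_Phi (a + 0 * δ)).comp 0 (hasDerivAt_affine a δ)
  simpa [Function.comp_def] using this

lemma hasDerivAt_PsiCompNeg (a δ : ℝ) :
    HasDerivAt (fun u : ℝ => Psi (-(a + u * δ))) (psi' (-a) * (-δ)) 0 := by
  have h := hasDerivAt_PsiComp (-a) (-δ)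
  have he : (fun u : ℝ => Psi (-a + u * -δ)) = fun u : ℝ => Psi (-(a + u * δ)) := by
    funext u; congr 1; ring
  rwa [he] at h

lemma hasDerivAt_PhiCompNeg (a δ : ℝ) :
    HasDerivAt (fun u : ℝ => Phi (-(a + u * δ))) ((4/(1+a^2)) * (-δ)) 0 := by
  have h := hasDerivAt_PhiComp (-a) (-δ)
  have he : (fun u : ℝ => Phi (-a + u * -δ)) = fun u : ℝ => Phi (-(a + u * δ)) := by
    funext u; congr 1; ring
  have h2 : (4:ℝ)/(1+(-a)^2) = 4/(1+a^2) := by ring_nf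
  rw [he, h2] at h
  exact h

lemma hasDerivAt_phi_slice {d : ℕ} (w e : EuclideanSpace ℝ (Fin d)) (J : ℕ)
    (hco : ∀ (u : ℝ) (k : ℕ), zc (w + u • e) k = zc w k + u * dlt J k)
    (k : ℕ) (hk : 2 ≤ k) :
    HasDerivAt (fun u : ℝ => phi (w + u • e) k) (Dphi w J k) 0 := by
  have hk1 : k ≠ 1 := by omega
  have he : (fun u : ℝ => phi (w + u • e) k)
      = fun u : ℝ => Psi (-(zc w (k-1) + u * dlt J (k-1))) * Phi (-(zc w k + u * dlt J k))
        - Psi (zc w (k-1) + u * dlt J (k-1)) * Phi (zc w k + u * dlt J k) := by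
    funext u
    rw [phi, if_neg hk1, hco, hco]
  rw [he]
  have h1 := (hasDerivAt_PsiCompNeg (zc w (k-1)) (dlt J (k-1))).mul
    (hasDerivAt_PhiCompNeg (zc w k) (dlt J k))
  have h2 := (hasDerivAt_PsiComp (zc w (k-1)) (dlt J (k-1))).mul
    (hasDerivAt_PhiComp (zc w k) (dlt J k))
  have h3 := h1.sub h2
  refine h3.congr_deriv ?_
  simp only [zero_mul, add_zero]
  unfold Dphi
  ring

lemma hasDerivAt_phi1_slice {d : ℕ} (w e : EuclideanSpace ℝ (Fin d)) (J : ℕ)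
    (hco : ∀ (u : ℝ) (k : ℕ), zc (w + u • e) k = zc w k + u * dlt J k) :
    HasDerivAt (fun u : ℝ => phi (w + u • e) 1) (Dphi1 w J) 0 := by
  have he : (fun u : ℝ => phi (w + u • e) 1)
      = fun u : ℝ => -(Psi 1 * Phi (zc w 1 + u * dlt J 1)) := by
    funext u
    rw [phi, if_pos rfl, hco]
  rw [he]
  exact ((hasDerivAt_PhiComp (zc w 1) (dlt J 1)).const_mul (Psi 1)).neg

lemma hasDerivAt_hfun_slice {d : ℕ} (w e : EuclideanSpace ℝ (Fin d)) (J : ℕ)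
    (hco : ∀ (u : ℝ) (k : ℕ), zc (w + u • e) k = zc w k + u * dlt J k)
    (m i : ℕ) :
    HasDerivAt (fun u : ℝ => hfun m i (w + u • e)) (DH w J m i) 0 := by
  unfold hfun DH
  by_cases h1 : i ≤ m / 3
  · simp only [if_pos h1]
    refine (hasDerivAt_phi1_slice w e J hco).add (HasDerivAt.const_mul 3 ?_)
    refine HasDerivAt.fun_sum fun j hj => ?_
    exact hasDerivAt_phi_slice w e J hco (2*j) (by
      have := (Finset.mem_Icc.1 hj).1; omega)
  · by_cases h2 : i ≤ 2 * m / 3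
    · simp only [if_neg h1, if_pos h2]
      exact hasDerivAt_phi1_slice w e J hco
    · simp only [if_neg h1, if_neg h2]
      refine (hasDerivAt_phi1_slice w e J hco).add (HasDerivAt.const_mul 3 ?_)
      refine HasDerivAt.fun_sum fun j hj => ?_
      exact hasDerivAt_phi_slice w e J hco (2*j+1) (by
        have := (Finset.mem_Icc.1 hj).1; omega)

-- multivariate differentiability
lemma differentiable_zc {d : ℕ} (k : ℕ) :
    Differentiable ℝ (fun z : EuclideanSpace ℝ (Fin d) => zc z k) := by
  unfold zc
  by_cases h : 1 ≤ k ∧ k - 1 < d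
  · simp only [dif_pos h]
    exact ContinuousLinearMap.differentiable (EuclideanSpace.proj (𝕜 := ℝ) (⟨k-1, h.2⟩ : Fin d))
  · simp only [dif_neg h]
    exact differentiable_const 0

lemma differentiable_phi {d : ℕ} (k : ℕ) :
    Differentiable ℝ (fun z : EuclideanSpace ℝ (Fin d) => phi z k) := by
  unfold phi
  by_cases h : k = 1
  · simp only [if_pos h]
    exact ((differentiable_Phi.comp (differentiable_zc 1)).const_mul (Psi 1)).neg
  · simp only [if_neg h]
    refine Differentiable.sub ?_ ?_
    · exact (differentiable_Psi.comp (differentiable_zc (k-1)).neg).mul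
        (differentiable_Phi.comp (differentiable_zc k).neg)
    · exact (differentiable_Psi.comp (differentiable_zc (k-1))).mul
        (differentiable_Phi.comp (differentiable_zc k))

lemma differentiable_hfun {d : ℕ} (m i : ℕ) :
    Differentiable ℝ (fun z : EuclideanSpace ℝ (Fin d) => hfun m i z) := by
  unfold hfun
  by_cases h1 : i ≤ m / 3
  · simp only [if_pos h1]
    exact (differentiable_phi 1).add
      ((Differentiable.fun_sum fun j _ => differentiable_phi (2*j)).const_mul 3)
  · by_cases h2 : i ≤ 2 * m / 3
    · simp only [if_neg h1, if_pos h2]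
      exact differentiable_phi 1
    · simp only [if_neg h1, if_neg h2]
      exact (differentiable_phi 1).add
        ((Differentiable.fun_sum fun j _ => differentiable_phi (2*j+1)).const_mul 3)

lemma differentiable_ff {d : ℕ} (m : ℕ) (Lf ε : ℝ) (i : ℕ) :
    Differentiable ℝ (fun z : EuclideanSpace ℝ (Fin d) => ff m Lf ε i z) := by
  unfold ff
  exact ((differentiable_hfun m i).comp
    (differentiable_id.const_smul (Real.sqrt m * Lf / (150 * π * ε)))).const_mul _


/-- If some coordinate of z is smaller than 150πε/(√m·L_f) in absolute value, then
‖(1/m)·Σᵢ ∇fᵢ(z)‖ > 2ε/√m. -/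
theorem stmt_7 (Lf ε : ℝ) (hLf : 0 < Lf) (hε0 : 0 < ε) (hε1 : ε < 1)
    (m₁ m₂ : ℕ) (hm₁ : 2 ≤ m₁) (hm₂ : 1 ≤ m₂) (heven : Even (m₁ * m₂))
    (d : ℕ) (hd : 5 ≤ d) (hodd : Odd d)
    (z : EuclideanSpace ℝ (Fin d)) (j : Fin d)
    (hz : |z j| < 150 * π * ε / (Real.sqrt (3 * m₁ * m₂) * Lf)) :
    2 * ε / Real.sqrt (3 * m₁ * m₂) <
      ‖((3 * m₁ * m₂ : ℝ))⁻¹ •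
        ∑ i ∈ Finset.Icc 1 (3 * m₁ * m₂), gradient (ff (3 * m₁ * m₂) Lf ε i) z‖ := by
  have hπ := Real.pi_pos
  set M : ℕ := 3 * m₁ * m₂ with hM
  have hn1 : 1 ≤ m₁ * m₂ := Nat.one_le_iff_ne_zero.2 (by positivity)
  set n : ℕ := m₁ * m₂ with hn
  have hM3n : M = 3 * n := by rw [hM, hn]; ring
  have hMpos : 0 < M := by omega
  have hMr : (0:ℝ) < (M:ℝ) := by exact_mod_cast hMpos
  have hcast : ((M:ℕ):ℝ) = 3 * (m₁:ℝ) * (m₂:ℝ) := by rw [hM]; push_cast; ring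
  rw [← hcast] at hz ⊢
  set s : ℝ := Real.sqrt M * Lf / (150 * π * ε) with hs_def
  set c : ℝ := 300 * π * ε ^ 2 / ((M:ℝ) * Lf) with hc_def
  have hsqrt : 0 < Real.sqrt (M:ℝ) := Real.sqrt_pos.2 hMr
  have hs : 0 < s := by rw [hs_def]; positivity
  have hc : 0 < c := by rw [hc_def]; positivity
  set w : EuclideanSpace ℝ (Fin d) := s • z with hw
  have hwj : |w j| < 1 := by
    have hwz : w j = s * z j := rfl
    rw [hwz, abs_mul, abs_of_pos hs]
    calc s * |z j| < s * (150 * π * ε / (Real.sqrt (M:ℝ) * Lf)) :=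
          mul_lt_mul_of_pos_left hz hs
      _ = 1 := by rw [hs_def]; field_simp
  set S : Finset (Fin d) := Finset.univ.filter (fun i => |w i| < 1) with hS
  have hjS : j ∈ S := by simp [hS, hwj]
  set j0 : Fin d := S.min' ⟨j, hjS⟩ with hj0
  have hj0S : j0 ∈ S := S.min'_mem _
  have hwj0 : |w j0| < 1 := by
    have := hj0S
    rw [hS, Finset.mem_filter] at this
    exact this.2
  have hmin : ∀ i : Fin d, i < j0 → 1 ≤ |w i| := by
    intro i hi
    by_contra hcon
    push_neg at hcon
    have hiS : i ∈ S := by rw [hS, Finset.mem_filter]; exact ⟨Finset.mem_univ _, hcon⟩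
    exact absurd (S.min'_le i hiS) (not_le.2 hi)
  set J : ℕ := j0.val + 1 with hJ
  set e : EuclideanSpace ℝ (Fin d) := EuclideanSpace.single j0 (1:ℝ) with he
  have hco : ∀ (u : ℝ) (k : ℕ), zc (w + u • e) k = zc w k + u * dlt J k :=
    fun u k => zc_add_single w j0 u k
  have hj0lt := j0.isLt
  have hzcJ : zc w J = w j0 := by
    unfold zc
    rw [dif_pos ⟨by omega, by omega⟩]
    exact congrArg w (Fin.ext (by omega : J - 1 = j0.val))
  have hb : |zc w J| ≤ 1 := by rw [hzcJ]; exact hwj0.le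
  -- slice derivatives
  have key : ∀ i : ℕ, HasDerivAt (fun t : ℝ => ff M Lf ε i (z + t • e))
      (c * (DH w J M i * s)) 0 := by
    intro i
    have hrw : (fun t : ℝ => ff M Lf ε i (z + t • e))
        = fun t : ℝ => c * hfun M i (w + (s * t) • e) := by
      funext t
      simp only [ff]
      rw [hc_def, hs_def, hw]
      congr 2
      rw [smul_add, smul_smul]
    rw [hrw]
    have hsl := hasDerivAt_hfun_slice w e J hco M i
    have hin : HasDerivAt (fun t : ℝ => s * t) s 0 := by
      simpa using (hasDerivAt_id (0:ℝ)).const_mul s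
    have hsl' : HasDerivAt (fun u : ℝ => hfun M i (w + u • e)) (DH w J M i)
        ((fun t : ℝ => s * t) 0) := by simpa using hsl
    exact (hsl'.comp 0 hin).const_mul c
  -- gradients
  have hgrad : ∀ i : ℕ, (inner ℝ (gradient (ff M Lf ε i) z) e : ℝ) = c * (DH w J M i * s) := by
    intro i
    have hdiff : DifferentiableAt ℝ (ff M Lf ε i) z := (differentiable_ff M Lf ε i) z
    have hline : HasDerivAt (fun t : ℝ => z + t • e) e 0 := by
      simpa using ((hasDerivAt_id (0:ℝ)).smul_const e).const_add z
    have hfd : HasFDerivAt (ff M Lf ε i) (fderiv ℝ (ff M Lf ε i) z)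
        ((fun t : ℝ => z + t • e) 0) := by simpa using hdiff.hasFDerivAt
    have hcomp := hfd.comp_hasDerivAt 0 hline
    have huniq : fderiv ℝ (ff M Lf ε i) z e = c * (DH w J M i * s) := hcomp.unique (key i)
    have hg : (inner ℝ (gradient (ff M Lf ε i) z) e : ℝ) = fderiv ℝ (ff M Lf ε i) z e := by
      simp only [gradient]
      exact InnerProductSpace.toDual_symm_apply
    rw [hg]
    exact huniq
  -- sum of DH
  set T : ℝ := Dphi1 w J + (∑ jj ∈ Finset.Icc 1 (d/2), Dphi w J (2*jj))
      + (∑ jj ∈ Finset.Icc 1 (d/2), Dphi w J (2*jj+1)) with hT_def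
  have hA : ∀ i ∈ Finset.Ico 1 (n+1), DH w J M i
      = Dphi1 w J + 3 * ∑ jj ∈ Finset.Icc 1 (d/2), Dphi w J (2*jj) := by
    intro i hi
    have hmem := Finset.mem_Ico.1 hi
    unfold DH
    rw [if_pos (by omega : i ≤ M / 3)]
  have hB : ∀ i ∈ Finset.Ico (n+1) (2*n+1), DH w J M i = Dphi1 w J := by
    intro i hi
    have hmem := Finset.mem_Ico.1 hi
    unfold DH
    rw [if_neg (by omega : ¬ i ≤ M / 3), if_pos (by omega : i ≤ 2 * M / 3)]
  have hC : ∀ i ∈ Finset.Ico (2*n+1) (M+1), DH w J M i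
      = Dphi1 w J + 3 * ∑ jj ∈ Finset.Icc 1 (d/2), Dphi w J (2*jj+1) := by
    intro i hi
    have hmem := Finset.mem_Ico.1 hi
    unfold DH
    rw [if_neg (by omega : ¬ i ≤ M / 3), if_neg (by omega : ¬ i ≤ 2 * M / 3)]
  have hsum_DH : ∑ i ∈ Finset.Icc 1 M, DH w J M i = (M:ℝ) * T := by
    rw [← Finset.Ico_add_one_right_eq_Icc]
    rw [← Finset.sum_Ico_consecutive (fun i => DH w J M i)
      (show 1 ≤ n+1 by omega) (show n+1 ≤ M+1 by omega)]
    rw [← Finset.sum_Ico_consecutive (fun i => DH w J M i)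
      (show n+1 ≤ 2*n+1 by omega) (show 2*n+1 ≤ M+1 by omega)]
    rw [Finset.sum_congr rfl hA, Finset.sum_congr rfl hB, Finset.sum_congr rfl hC]
    rw [Finset.sum_const, Finset.sum_const, Finset.sum_const]
    have c1 : (Finset.Ico 1 (n+1)).card = n := by rw [Nat.card_Ico]; omega
    have c2 : (Finset.Ico (n+1) (2*n+1)).card = n := by rw [Nat.card_Ico]; omega
    have c3 : (Finset.Ico (2*n+1) (M+1)).card = n := by rw [Nat.card_Ico]; omega
    rw [c1, c2, c3, nsmul_eq_mul, nsmul_eq_mul, nsmul_eq_mul]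
    have hMn : (M:ℝ) = 3 * (n:ℝ) := by exact_mod_cast congrArg (Nat.cast (R := ℝ)) hM3n
    rw [hMn, hT_def]
    ring
  -- bound on T
  have hexp : Real.exp (-1) < 1/2 := _root_.exp_neg_one_lt_half
  have hTb : T ≤ -(2 * (1 - Real.exp (-1))) := by
    have hSe : (∑ jj ∈ Finset.Icc 1 (d/2), Dphi w J (2*jj)) ≤ 0 :=
      Finset.sum_nonpos fun jj _ => Dphi_nonpos w J _
    have hSo : (∑ jj ∈ Finset.Icc 1 (d/2), Dphi w J (2*jj+1)) ≤ 0 :=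
      Finset.sum_nonpos fun jj _ => Dphi_nonpos w J _
    have hD1 : Dphi1 w J ≤ 0 := Dphi1_nonpos w J
    by_cases hJ1 : J = 1
    · have hD1b : Dphi1 w 1 ≤ -(2 * (1 - Real.exp (-1))) := Dphi1_at w (hJ1 ▸ hb)
      rw [hT_def, hJ1]
      rw [hJ1] at hSe hSo
      linarith
    · have hJ2 : 2 ≤ J := by omega
      have ha : 1 ≤ |zc w (J-1)| := by
        have hzz : zc w (J-1) = w ⟨J-1-1, by omega⟩ := by
          unfold zc; rw [dif_pos ⟨by omega, by omega⟩]
        rw [hzz]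
        refine hmin _ ?_
        rw [Fin.lt_def]
        simp only []
        omega
      have hDJ : Dphi w J J ≤ -(2 * (1 - Real.exp (-1))) := Dphi_at_J w hJ2 hb ha
      have hJd : J ≤ d := by omega
      have hdodd : d % 2 = 1 := Nat.odd_iff.1 hodd
      rcases Nat.even_or_odd J with hpar | hpar
      · have hpar2 : J % 2 = 0 := Nat.even_iff.1 hpar
        have hmem : J/2 ∈ Finset.Icc 1 (d/2) := by
          rw [Finset.mem_Icc]; omega
        have h2j : 2 * (J/2) = J := by omega
        have hsum_le : (∑ jj ∈ Finset.Icc 1 (d/2), Dphi w J (2*jj)) ≤ Dphi w J J := by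
          rw [← Finset.sum_erase_add _ _ hmem, h2j]
          have := Finset.sum_nonpos (s := (Finset.Icc 1 (d/2)).erase (J/2))
            (f := fun jj => Dphi w J (2*jj)) (fun jj _ => Dphi_nonpos w J (2*jj))
          linarith
        rw [hT_def]; linarith
      · have hpar2 : J % 2 = 1 := Nat.odd_iff.1 hpar
        have hmem : J/2 ∈ Finset.Icc 1 (d/2) := by
          rw [Finset.mem_Icc]; omega
        have h2j : 2 * (J/2) + 1 = J := by omega
        have hsum_le : (∑ jj ∈ Finset.Icc 1 (d/2), Dphi w J (2*jj+1)) ≤ Dphi w J J := by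
          rw [← Finset.sum_erase_add _ _ hmem, h2j]
          have := Finset.sum_nonpos (s := (Finset.Icc 1 (d/2)).erase (J/2))
            (f := fun jj => Dphi w J (2*jj+1)) (fun jj _ => Dphi_nonpos w J (2*jj+1))
          linarith
        rw [hT_def]; linarith
  -- assemble
  set v : EuclideanSpace ℝ (Fin d) :=
    ((M:ℝ))⁻¹ • ∑ i ∈ Finset.Icc 1 M, gradient (ff M Lf ε i) z with hv
  have hinner : (inner ℝ v e : ℝ) = c * s * T := by
    rw [hv, real_inner_smul_left, sum_inner]
    rw [Finset.sum_congr rfl (fun i _ => hgrad i)]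
    have hms : ∑ i ∈ Finset.Icc 1 M, c * (DH w J M i * s)
        = c * s * ∑ i ∈ Finset.Icc 1 M, DH w J M i := by
      rw [Finset.mul_sum]
      exact Finset.sum_congr rfl fun i _ => by ring
    rw [hms, hsum_DH]
    field_simp
  have hnorm_e : ‖e‖ = 1 := by rw [he, EuclideanSpace.norm_single]; norm_num
  have h1 : |(inner ℝ v e : ℝ)| ≤ ‖v‖ := by
    have h2 := abs_real_inner_le_norm v e
    rwa [hnorm_e, mul_one] at h2
  have hcs : c * s = 2 * ε / Real.sqrt (M:ℝ) := by
    rw [hc_def, hs_def, eq_div_iff (ne_of_gt hsqrt)]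
    have hsq : Real.sqrt (M:ℝ) * Real.sqrt (M:ℝ) = (M:ℝ) := Real.mul_self_sqrt hMr.le
    field_simp
    linear_combination 300 * hsq
  have hTabs : 1 < -T := by linarith
  have hfinal : 2 * ε / Real.sqrt (M:ℝ) < |(inner ℝ v e : ℝ)| := by
    rw [hinner, abs_mul, abs_of_pos (mul_pos hc hs), abs_of_neg (by linarith : T < 0)]
    calc 2 * ε / Real.sqrt (M:ℝ) = c * s * 1 := by rw [hcs]; ring
      _ < c * s * (-T) := by
          exact mul_lt_mul_of_pos_left hTabs (mul_pos hc hs)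
  exact lt_of_lt_of_le hfinal h1


end
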